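/- With the data of the matrix mean-field map setup (finite type set Φ, matrices H(φ), G(φ), Q(φ) with ‖H(φ)‖ < 1 for all φ, probability weights P), for any two real n×n matrices L₁, L₂ with ‖L₁‖ ≤ 1 and ‖L₂‖ ≤ 1, one has ‖T̄(L₂) - T̄(L₁)‖ ≤ ζ · ‖L₂ - L₁‖, where ζ := ∑_{φ∈Φ} (‖Q(φ)‖ ‖G(φ)‖ / (1 - ‖H(φ)‖)²) P(φ). -/

import Mathlib

/-!
Writing `A := Hᵀ`, the two series in `T̄_φ(L₂) - T̄_φ(L₁)` differ termwise by
`Aᵅ Q (L₂^{α+1} - L₁^{α+1})`, and on the unit ball `‖L₂^{k} - L₁^{k}‖ ≤ k ‖L₂ - L₁‖`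
(telescoping). Since `‖Hᵀ‖ = ‖H‖ < 1`, summing `(α + 1) ‖H‖ᵅ = 1 / (1 - ‖H‖)²` gives the
Lipschitz constant of `T̄_φ`; averaging over `φ` with the weights `P` gives `ζ`.
-/

/-- The single-type matrix map `T̄_φ(L) := H + G ∑_{α=0}^∞ (Hᵀ)^α Q L^{α+1}`.
Matrices are modeled as continuous linear maps on Euclidean space (operator norm
induced by the Euclidean norm); transpose is the adjoint; products are composition. -/
noncomputable def TbarPhi {n : ℕ}
    (H G Q : EuclideanSpace ℝ (Fin n) →L[ℝ] EuclideanSpace ℝ (Fin n))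
    (L : EuclideanSpace ℝ (Fin n) →L[ℝ] EuclideanSpace ℝ (Fin n)) :
    EuclideanSpace ℝ (Fin n) →L[ℝ] EuclideanSpace ℝ (Fin n) :=
  H + G * ∑' α : ℕ, (ContinuousLinearMap.adjoint H) ^ α * Q * L ^ (α + 1)

/-- The matrix mean-field map `T̄(L) := ∑_{φ ∈ Φ} T̄_φ(L) P(φ)`. -/
noncomputable def Tbar {n : ℕ} {Φ : Type*} [Fintype Φ]
    (H G Q : Φ → (EuclideanSpace ℝ (Fin n) →L[ℝ] EuclideanSpace ℝ (Fin n)))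
    (P : Φ → ℝ)
    (L : EuclideanSpace ℝ (Fin n) →L[ℝ] EuclideanSpace ℝ (Fin n)) :
    EuclideanSpace ℝ (Fin n) →L[ℝ] EuclideanSpace ℝ (Fin n) :=
  ∑ φ, P φ • TbarPhi (H φ) (G φ) (Q φ) L

section NormedRing

variable {R : Type*} [NormedRing R]

theorem norm_pow_mul_le (a b : R) (k : ℕ) : ‖a ^ k * b‖ ≤ ‖a‖ ^ k * ‖b‖ := by
  induction k with
  | zero => simp
  | succ k ih =>
    calc ‖a ^ (k + 1) * b‖ = ‖a * (a ^ k * b)‖ := by rw [pow_succ', mul_assoc]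
      _ ≤ ‖a‖ * (‖a‖ ^ k * ‖b‖) := (norm_mul_le _ _).trans (by gcongr)
      _ = ‖a‖ ^ (k + 1) * ‖b‖ := by ring

theorem norm_pow_succ_le_one {a : R} (ha : ‖a‖ ≤ 1) (k : ℕ) : ‖a ^ (k + 1)‖ ≤ 1 :=
  (norm_pow_le' a k.succ_pos).trans (pow_le_one₀ (norm_nonneg a) ha)

theorem norm_pow_succ_sub_pow_succ_le {a b : R} (ha : ‖a‖ ≤ 1) (hb : ‖b‖ ≤ 1) (k : ℕ) :
    ‖a ^ (k + 1) - b ^ (k + 1)‖ ≤ (k + 1) * ‖a - b‖ := by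
  induction k with
  | zero => simp
  | succ k ih =>
    have htelescope : a ^ (k + 1 + 1) - b ^ (k + 1 + 1)
        = a ^ (k + 1) * (a - b) + (a ^ (k + 1) - b ^ (k + 1)) * b := by
      simp only [pow_succ _ (k + 1), mul_sub, sub_mul]
      abel
    calc ‖a ^ (k + 1 + 1) - b ^ (k + 1 + 1)‖
        ≤ ‖a ^ (k + 1)‖ * ‖a - b‖ + ‖a ^ (k + 1) - b ^ (k + 1)‖ * ‖b‖ := by
          rw [htelescope]
          exact (norm_add_le _ _).trans (add_le_add (norm_mul_le _ _) (norm_mul_le _ _))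
      _ ≤ 1 * ‖a - b‖ + ((k + 1) * ‖a - b‖) * 1 := by
          gcongr
          exact norm_pow_succ_le_one ha k
      _ = (↑(k + 1) + 1) * ‖a - b‖ := by push_cast; ring

variable [CompleteSpace R]

theorem summable_pow_mul_mul_pow_succ {A L : R} (Q : R) (hA : ‖A‖ < 1) (hL : ‖L‖ ≤ 1) :
    Summable fun i : ℕ => A ^ i * Q * L ^ (i + 1) := by
  refine Summable.of_norm_bounded
    ((summable_geometric_of_lt_one (norm_nonneg A) hA).mul_right ‖Q‖) fun i => ?_
  calc ‖A ^ i * Q * L ^ (i + 1)‖ ≤ ‖A ^ i * Q‖ * ‖L ^ (i + 1)‖ := norm_mul_le _ _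
    _ ≤ ‖A‖ ^ i * ‖Q‖ * 1 := by
        gcongr
        exacts [norm_pow_mul_le A Q i, norm_pow_succ_le_one hL i]
    _ = ‖A‖ ^ i * ‖Q‖ := mul_one _

theorem norm_tsum_pow_mul_mul_pow_succ_sub_le {A L₁ L₂ : R} (Q : R) (hA : ‖A‖ < 1)
    (hL₁ : ‖L₁‖ ≤ 1) (hL₂ : ‖L₂‖ ≤ 1) :
    ‖∑' i : ℕ, A ^ i * Q * L₂ ^ (i + 1) - ∑' i : ℕ, A ^ i * Q * L₁ ^ (i + 1)‖
      ≤ ‖Q‖ / (1 - ‖A‖) ^ 2 * ‖L₂ - L₁‖ := by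
  have hgeom : HasSum (fun i : ℕ => ((i + 1).choose 1 : ℝ) * ‖A‖ ^ i) (1 / (1 - ‖A‖) ^ 2) :=
    hasSum_choose_mul_geometric_of_norm_lt_one 1 (by rwa [norm_norm])
  rw [← (summable_pow_mul_mul_pow_succ Q hA hL₂).tsum_sub
    (summable_pow_mul_mul_pow_succ Q hA hL₁)]
  refine (tsum_of_norm_bounded (hgeom.mul_left (‖Q‖ * ‖L₂ - L₁‖)) fun i => ?_).trans_eq (by ring)
  rw [← mul_sub, Nat.choose_one_right]
  calc ‖A ^ i * Q * (L₂ ^ (i + 1) - L₁ ^ (i + 1))‖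
      ≤ ‖A ^ i * Q‖ * ‖L₂ ^ (i + 1) - L₁ ^ (i + 1)‖ := norm_mul_le _ _
    _ ≤ ‖A‖ ^ i * ‖Q‖ * ((i + 1) * ‖L₂ - L₁‖) := by
        gcongr
        exacts [norm_pow_mul_le A Q i, norm_pow_succ_sub_pow_succ_le hL₂ hL₁ i]
    _ = ‖Q‖ * ‖L₂ - L₁‖ * (↑(i + 1) * ‖A‖ ^ i) := by push_cast; ring

end NormedRing

theorem norm_TbarPhi_sub_le {n : ℕ}
    (H G Q : EuclideanSpace ℝ (Fin n) →L[ℝ] EuclideanSpace ℝ (Fin n))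
    {L₁ L₂ : EuclideanSpace ℝ (Fin n) →L[ℝ] EuclideanSpace ℝ (Fin n)} (hH : ‖H‖ < 1)
    (hL₁ : ‖L₁‖ ≤ 1) (hL₂ : ‖L₂‖ ≤ 1) :
    ‖TbarPhi H G Q L₂ - TbarPhi H G Q L₁‖ ≤ ‖Q‖ * ‖G‖ / (1 - ‖H‖) ^ 2 * ‖L₂ - L₁‖ := by
  have hadj : ‖ContinuousLinearMap.adjoint H‖ = ‖H‖ := LinearIsometryEquiv.norm_map _ H
  calc ‖TbarPhi H G Q L₂ - TbarPhi H G Q L₁‖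
      ≤ ‖G‖ * (‖Q‖ / (1 - ‖H‖) ^ 2 * ‖L₂ - L₁‖) := by
        rw [TbarPhi, TbarPhi, add_sub_add_left_eq_sub, ← mul_sub, ← hadj]
        exact (norm_mul_le _ _).trans <| by
          gcongr
          exact norm_tsum_pow_mul_mul_pow_succ_sub_le Q (hadj ▸ hH) hL₁ hL₂
    _ = ‖Q‖ * ‖G‖ / (1 - ‖H‖) ^ 2 * ‖L₂ - L₁‖ := by ring

theorem stmt9_general {n : ℕ} {Φ : Type*} [Fintype Φ]
    (H G Q : Φ → (EuclideanSpace ℝ (Fin n) →L[ℝ] EuclideanSpace ℝ (Fin n)))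
    (hH : ∀ φ, ‖H φ‖ < 1)
    (P : Φ → ℝ) (hP : ∀ φ, 0 ≤ P φ)
    (L1 L2 : EuclideanSpace ℝ (Fin n) →L[ℝ] EuclideanSpace ℝ (Fin n))
    (hL1 : ‖L1‖ ≤ 1) (hL2 : ‖L2‖ ≤ 1) :
    ‖Tbar H G Q P L2 - Tbar H G Q P L1‖
      ≤ (∑ φ, ‖Q φ‖ * ‖G φ‖ / (1 - ‖H φ‖) ^ 2 * P φ) * ‖L2 - L1‖ := by
  calc ‖Tbar H G Q P L2 - Tbar H G Q P L1‖
      = ‖∑ φ, P φ • (TbarPhi (H φ) (G φ) (Q φ) L2 - TbarPhi (H φ) (G φ) (Q φ) L1)‖ := by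
        simp only [Tbar, smul_sub, Finset.sum_sub_distrib]
    _ ≤ ∑ φ, ‖P φ • (TbarPhi (H φ) (G φ) (Q φ) L2 - TbarPhi (H φ) (G φ) (Q φ) L1)‖ :=
        norm_sum_le _ _
    _ ≤ ∑ φ, ‖Q φ‖ * ‖G φ‖ / (1 - ‖H φ‖) ^ 2 * P φ * ‖L2 - L1‖ := by
        gcongr with φ
        rw [norm_smul, Real.norm_of_nonneg (hP φ)]
        exact (mul_le_mul_of_nonneg_left (norm_TbarPhi_sub_le _ _ _ (hH φ) hL1 hL2)
          (hP φ)).trans_eq (by ring)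
    _ = (∑ φ, ‖Q φ‖ * ‖G φ‖ / (1 - ‖H φ‖) ^ 2 * P φ) * ‖L2 - L1‖ := (Finset.sum_mul ..).symm

/-- In the matrix mean-field map setup, for any `L₁, L₂` with
`‖L₁‖ ≤ 1` and `‖L₂‖ ≤ 1`, one has `‖T̄(L₂) - T̄(L₁)‖ ≤ ζ ‖L₂ - L₁‖`, where
`ζ = ∑_φ (‖Q(φ)‖‖G(φ)‖/(1-‖H(φ)‖)²) P(φ)`. -/
theorem stmt9 {n : ℕ} {Φ : Type*} [Fintype Φ] [Nonempty Φ]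
    (H G Q : Φ → (EuclideanSpace ℝ (Fin n) →L[ℝ] EuclideanSpace ℝ (Fin n)))
    (hH : ∀ φ, ‖H φ‖ < 1)
    (P : Φ → ℝ) (hP : ∀ φ, 0 ≤ P φ) (hPsum : ∑ φ, P φ = 1)
    (L1 L2 : EuclideanSpace ℝ (Fin n) →L[ℝ] EuclideanSpace ℝ (Fin n))
    (hL1 : ‖L1‖ ≤ 1) (hL2 : ‖L2‖ ≤ 1) :
    ‖Tbar H G Q P L2 - Tbar H G Q P L1‖
      ≤ (∑ φ, ‖Q φ‖ * ‖G φ‖ / (1 - ‖H φ‖) ^ 2 * P φ) * ‖L2 - L1‖ :=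
  stmt9_general H G Q hH P hP L1 L2 hL1 hL2
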